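/- Let F be a field of characteristic zero, λ ∈ F nonzero. Every solution a ∈ F(x) of x·a' = λ·a with a ≠ 0 satisfies: λ is an integer n ≥ 0 or n < 0 and a = c·x^n for some nonzero c ∈ F; in particular if λ ∉ ℤ there is no nonzero rational solution. -/

import Mathlib

/-!
Write `a = P / Q` in lowest terms. Clearing denominators turns `X a' = λ a` into
`X · W(Q, P) = λ P Q` with `W(Q, P) = Q P' - Q' P`, and coprimality of `P` and `Q` then gives
`P ∣ X P'` and `Q ∣ X Q'`. Since `X p'` has degree at most `deg p`, such a divisibility means
`X p' = e p` for a constant `e`, i.e. `j p_j = e p_j` for every coefficient; in characteristic zero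
only one coefficient survives, so `P` and `Q` are monomials and `a = c Xⁿ` with `n ∈ ℤ`.
Finally `X (c Xⁿ)' = n c Xⁿ`, so `n = λ`.
-/

open Polynomial

namespace Polynomial

section Semiring

variable {R : Type*} [Semiring R]

theorem coeff_X_mul_derivative (p : R[X]) (j : ℕ) :
    (X * derivative p).coeff j = j * p.coeff j := by
  cases j with
  | zero => simp
  | succ i => rw [coeff_X_mul, coeff_derivative, Nat.cast_comm]; push_cast; rfl

theorem natDegree_X_mul_derivative_le (p : R[X]) :
    (X * derivative p).natDegree ≤ p.natDegree := by
  refine natDegree_le_iff_coeff_eq_zero.mpr fun j hj => ?_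
  rw [coeff_X_mul_derivative, coeff_eq_zero_of_natDegree_lt hj, mul_zero]

end Semiring

variable {R : Type*} [CommRing R] [IsDomain R]

theorem exists_X_mul_derivative_eq_C_mul_of_dvd {p : R[X]} (h : p ∣ X * derivative p) :
    ∃ e : R, X * derivative p = C e * p := by
  obtain ⟨r, hr⟩ := h
  rcases eq_or_ne p 0 with rfl | hp
  · exact ⟨0, by simp⟩
  rcases eq_or_ne r 0 with rfl | hr0
  · exact ⟨0, by simp [hr]⟩
  have hdeg := natDegree_X_mul_derivative_le p
  rw [hr, natDegree_mul hp hr0] at hdeg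
  refine ⟨r.coeff 0, ?_⟩
  rw [hr, mul_comm, ← eq_C_of_natDegree_eq_zero (by omega)]

variable [CharZero R]

theorem eq_C_mul_X_pow_of_X_mul_derivative_eq_C_mul {p : R[X]} {e : R}
    (h : X * derivative p = C e * p) : p = C p.leadingCoeff * X ^ p.natDegree := by
  have hcoeff : ∀ j, p.coeff j ≠ 0 → (j : R) = e := fun j hj => by
    have := congrArg (coeff · j) h
    simp only [coeff_X_mul_derivative, coeff_C_mul] at this
    exact mul_right_cancel₀ hj this
  ext j
  rw [coeff_C_mul_X_pow]
  split_ifs with hj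
  · rw [hj, leadingCoeff]
  · by_contra hne
    have hp : p ≠ 0 := by rintro rfl; simp at hne
    exact hj (Nat.cast_injective ((hcoeff j hne).trans
      (hcoeff _ (leadingCoeff_ne_zero.mpr hp)).symm))

theorem eq_C_mul_X_pow_of_dvd_X_mul_derivative {p : R[X]} (h : p ∣ X * derivative p) :
    p = C p.leadingCoeff * X ^ p.natDegree :=
  have ⟨_, he⟩ := exists_X_mul_derivative_eq_C_mul_of_dvd h
  eq_C_mul_X_pow_of_X_mul_derivative_eq_C_mul he

end Polynomial

theorem IsCoprime.dvd_X_mul_derivative_of_mul_dvd_X_mul_wronskian {R : Type*} [CommRing R]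
    {P Q : R[X]} (hPQ : IsCoprime P Q) (h : P * Q ∣ X * wronskian Q P) :
    P ∣ X * derivative P ∧ Q ∣ X * derivative Q := by
  have hP : P ∣ X * derivative P * Q := by
    have : P ∣ X * wronskian Q P + X * derivative Q * P :=
      dvd_add ((dvd_mul_right P Q).trans h) (dvd_mul_left P _)
    convert this using 1
    simp only [wronskian]; ring
  have hQ : Q ∣ X * derivative Q * P := by
    have : Q ∣ X * derivative P * Q - X * wronskian Q P :=
      dvd_sub (dvd_mul_left Q _) ((dvd_mul_left Q P).trans h)
    convert this using 1
    simp only [wronskian]; ring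
  exact ⟨hPQ.dvd_of_dvd_mul_right hP, hPQ.symm.dvd_of_dvd_mul_right hQ⟩

namespace RatFunc

variable {F : Type*} [Field F]

theorem eq_C_mul_X_zpow_of_dvd_X_mul_derivative [CharZero F] {a : RatFunc F}
    (hnum : a.num ∣ Polynomial.X * derivative a.num)
    (hdenom : a.denom ∣ Polynomial.X * derivative a.denom) :
    a = C a.num.leadingCoeff * X ^ ((a.num.natDegree : ℤ) - a.denom.natDegree) := by
  have hdenom_eq : a.denom = Polynomial.X ^ a.denom.natDegree := by
    rw [eq_C_mul_X_pow_of_dvd_X_mul_derivative hdenom, (monic_denom a).leadingCoeff, map_one,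
      one_mul, natDegree_X_pow]
  conv_lhs => rw [← num_div_denom a, eq_C_mul_X_pow_of_dvd_X_mul_derivative hnum, hdenom_eq]
  rw [zpow_sub₀ X_ne_zero, zpow_natCast, zpow_natCast, map_mul, map_pow, map_pow,
    algebraMap_C, algebraMap_X, mul_div_assoc]

section Derivation

variable (d : Derivation F (RatFunc F) (RatFunc F)) (hd : d X = 1)
include hd

theorem derivation_algebraMap (p : F[X]) :
    d (algebraMap F[X] (RatFunc F) p) = algebraMap F[X] (RatFunc F) (derivative p) := by
  rw [← aeval_X_left_eq_algebraMap, Derivation.map_aeval, hd, smul_eq_mul, mul_one,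
    aeval_X_left_eq_algebraMap]

theorem derivation_eq_wronskian_num_denom_div (a : RatFunc F) :
    d a = algebraMap F[X] (RatFunc F) (wronskian a.denom a.num) /
      algebraMap F[X] (RatFunc F) a.denom ^ 2 := by
  conv_lhs => rw [← num_div_denom a]
  rw [Derivation.leibniz_div, derivation_algebraMap d hd, derivation_algebraMap d hd, wronskian]
  simp only [map_sub, map_mul, smul_eq_mul]
  ring

theorem num_mul_denom_dvd_X_mul_wronskian {l : F} {a : RatFunc F} (heq : X * d a = C l * a) :
    a.num * a.denom ∣ Polynomial.X * wronskian a.denom a.num := by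
  refine ⟨Polynomial.C l, algebraMap_injective F ?_⟩
  have hdenom := algebraMap_ne_zero (K := F) a.denom_ne_zero
  have ha : a * algebraMap F[X] (RatFunc F) a.denom = algebraMap F[X] (RatFunc F) a.num :=
    (eq_div_iff hdenom).mp (num_div_denom a).symm
  have hda := derivation_eq_wronskian_num_denom_div d hd a
  rw [eq_div_iff (pow_ne_zero 2 hdenom)] at hda
  simp only [map_mul, algebraMap_X, algebraMap_C]
  linear_combination (algebraMap F[X] (RatFunc F) a.denom ^ 2) * heq - X * hda
    + (C l * algebraMap F[X] (RatFunc F) a.denom) * ha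

theorem X_mul_derivation_C_mul_X_zpow (c : F) (n : ℤ) :
    X * d (C c * X ^ n) = (n : RatFunc F) * (C c * X ^ n) := by
  rw [← algebraMap_eq_C, Derivation.leibniz, Derivation.map_algebraMap, Derivation.leibniz_zpow,
    hd, zpow_sub_one₀ X_ne_zero, smul_zero, add_zero, smul_eq_mul, zsmul_eq_mul, smul_eq_mul,
    mul_one]
  field_simp [X_ne_zero]

end Derivation

end RatFunc

theorem euler_equation_rational_solutions_general
    (F : Type*) [Field F] [CharZero F]
    (d : Derivation F (RatFunc F) (RatFunc F)) (hd : d RatFunc.X = 1)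
    (l : F) (a : RatFunc F) (ha : a ≠ 0)
    (heq : RatFunc.X * d a = RatFunc.C l * a) :
    ∃ n : ℤ, (n : F) = l ∧ ∃ c : F, c ≠ 0 ∧ a = RatFunc.C c * RatFunc.X ^ n := by
  obtain ⟨hnum, hdenom⟩ :=
    (RatFunc.isCoprime_num_denom a).dvd_X_mul_derivative_of_mul_dvd_X_mul_wronskian
      (RatFunc.num_mul_denom_dvd_X_mul_wronskian d hd heq)
  have ha_eq := RatFunc.eq_C_mul_X_zpow_of_dvd_X_mul_derivative hnum hdenom
  refine ⟨_, ?_, _, leadingCoeff_ne_zero.mpr (RatFunc.num_ne_zero ha), ha_eq⟩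
  have h_eigen := RatFunc.X_mul_derivation_C_mul_X_zpow d hd a.num.leadingCoeff
    ((a.num.natDegree : ℤ) - a.denom.natDegree)
  rw [← ha_eq, heq, ← map_intCast (RatFunc.C (K := F))] at h_eigen
  exact RatFunc.C_injective (mul_right_cancel₀ ha h_eigen).symm

/-- Every nonzero rational solution of the Euler equation `x a' = λ a` forces `λ`
to be an integer `n` and `a = c·xⁿ` for some nonzero `c ∈ F`; in particular if
`λ ∉ ℤ` there is no nonzero rational solution. -/
theorem euler_equation_rational_solutions
    (F : Type*) [Field F] [CharZero F]
    (d : Derivation F (RatFunc F) (RatFunc F)) (hd : d RatFunc.X = 1)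
    (l : F) (hl : l ≠ 0) (a : RatFunc F) (ha : a ≠ 0)
    (heq : RatFunc.X * d a = RatFunc.C l * a) :
    ∃ n : ℤ, (n : F) = l ∧ ∃ c : F, c ≠ 0 ∧ a = RatFunc.C c * RatFunc.X ^ n :=
  euler_equation_rational_solutions_general F d hd l a ha heq
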